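/- arXiv:2404.04938 — 2 statements merged into one kernel-verified Lean document; each statement's English description precedes it below -/
import Mathlib

section
/- For all measurable sets E, F ⊆ ℝ^d and α ∈ (0,1), the fractional perimeter satisfies the submodularity inequality P_α(E ∩ F) + P_α(E ∪ F) ≤ P_α(E) + P_α(F). -/
/-! Writing `k(x, y) = |x - y|^{-(d+α)}`, the perimeter `P_α(S)` is twice the measure of
`S × Sᶜ` under `k (dx ⊗ dy)`. For any measure `ν` on `X × X` the map `S ↦ ν (S × Sᶜ)` is
submodular, since `(E ∩ F) × (E ∩ F)ᶜ` and `(E ∪ F) × (E ∪ F)ᶜ` have their union inside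
`E × Eᶜ ∪ F × Fᶜ` and their intersection inside `E × Eᶜ ∩ F × Fᶜ`. -/

open MeasureTheory Filter
open scoped ENNReal symmDiff

/-- The fractional perimeter `P_α(E) = 2 ∫_E ∫_{E^c} |x-y|^{-(d+α)} dx dy`,
with values in `[0,∞]`. -/
noncomputable def fracPer (d : ℕ) (α : ℝ) (E : Set (EuclideanSpace ℝ (Fin d))) : ℝ≥0∞ :=
  2 * ∫⁻ x in E, ∫⁻ y in Eᶜ, ENNReal.ofReal (‖x - y‖ ^ (-((d : ℝ) + α)))

theorem measure_prod_compl_submodular {X : Type*} [MeasurableSpace X] (ν : Measure (X × X))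
    {E F : Set X} (hE : MeasurableSet E) (hF : MeasurableSet F) :
    ν ((E ∩ F) ×ˢ (E ∩ F)ᶜ) + ν ((E ∪ F) ×ˢ (E ∪ F)ᶜ) ≤ ν (E ×ˢ Eᶜ) + ν (F ×ˢ Fᶜ) := by
  rw [← measure_union_add_inter _ ((hE.union hF).prod (hE.union hF).compl),
    ← measure_union_add_inter _ (hF.prod hF.compl)]
  refine add_le_add (measure_mono ?_) (measure_mono ?_) <;>
  · intro p
    simp only [Set.mem_union, Set.mem_inter_iff, Set.mem_prod, Set.mem_compl_iff]
    tauto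

theorem fracPer_eq_withDensity_prod_compl (d : ℕ) (α : ℝ) {S : Set (EuclideanSpace ℝ (Fin d))}
    (hS : MeasurableSet S) :
    fracPer d α S = 2 * (volume.prod volume).withDensity
      (fun p => ENNReal.ofReal (‖p.1 - p.2‖ ^ (-((d : ℝ) + α)))) (S ×ˢ Sᶜ) := by
  rw [fracPer, withDensity_apply _ (hS.prod hS.compl), setLIntegral_prod]
  fun_prop

theorem fracPer_submodular_general (d : ℕ) (α : ℝ)
    (E F : Set (EuclideanSpace ℝ (Fin d)))
    (hE : MeasurableSet E) (hF : MeasurableSet F) :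
    fracPer d α (E ∩ F) + fracPer d α (E ∪ F) ≤ fracPer d α E + fracPer d α F := by
  simp only [fracPer_eq_withDensity_prod_compl d α, hE, hF, hE.inter hF, hE.union hF, ← mul_add]
  gcongr 2 * ?_
  exact measure_prod_compl_submodular _ hE hF

/-- Submodularity of the fractional perimeter:
`P_α(E ∩ F) + P_α(E ∪ F) ≤ P_α(E) + P_α(F)`. -/
theorem fracPer_submodular (d : ℕ) (α : ℝ) (hα : α ∈ Set.Ioo (0 : ℝ) 1)
    (E F : Set (EuclideanSpace ℝ (Fin d)))
    (hE : MeasurableSet E) (hF : MeasurableSet F) :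
    fracPer d α (E ∩ F) + fracPer d α (E ∪ F) ≤ fracPer d α E + fracPer d α F :=
  fracPer_submodular_general d α E F hE hF
end

section
/- Let Ω ⊆ ℝ^d be bounded, W ⊂ ℤ finite with elements w_1,…,w_M, α ∈ (0,1). Suppose {w^n} ⊂ ℱ is a sequence of W-valued functions with level sets E_i^n = (w^n)^{-1}({w_i}) satisfying sup_n P_α(E_i^n) < ∞ for each i. Then there exist a subsequence and w ∈ ℱ with level sets E_i such that χ_{E_i^{n_k}} → χ_{E_i} in L^1(Ω) for all i, w^{n_k} → w in L^1(Ω), and the limit sets {E_1,…,E_M} form a partition of Ω up to Lebesgue-null sets. -/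
open MeasureTheory Filter
open scoped ENNReal NNReal symmDiff

/-- Feasibility: `w` is measurable, vanishes outside `Ω` and takes values in
`W = {w_1, …, w_M}` a.e. on `Ω`. -/
def Feasible (d M : ℕ) (Ω : Set (EuclideanSpace ℝ (Fin d))) (wv : Fin M → ℤ)
    (w : EuclideanSpace ℝ (Fin d) → ℝ) : Prop :=
  Measurable w ∧ (∀ x, x ∉ Ω → w x = 0) ∧
    ∀ᵐ x ∂(volume.restrict Ω), ∃ i, w x = (wv i : ℝ)

/-!
On a cube `Q` of side `s`, the `L¹` distance of `𝟙_E` from its mean is `2|E∩Q||Eᶜ∩Q|/|Q|`;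
since `|x - y| ≤ √d s` on `Q`, summing over a tiling bounds the total by `√d^(d+α) s^α P_α(E)`.
So sets of bounded fractional perimeter are uniformly close to their cube averages at every fine
scale. A diagonal (Tychonoff) extraction makes all cube measures `|E_i^n ∩ Q|` converge, and as
only finitely many cubes meet `Ω`, the level sets become Cauchy in measure. Then so are the `w^n`,
since `{w^n ≠ w^m} ⊆ ⋃_i E_i^n ∆ E_i^m` a.e. A fast subsequence is a.e. eventually constant by
Borel–Cantelli; its measurable limit, cut off outside `Ω`, is the limit `w`. Because the values
lie in the finite set `W`, convergence in measure gives the level-set and `L¹` convergence.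
-/

open scoped Topology

namespace FracPerCompactness

section Measure

variable {X : Type*} [MeasurableSpace X]

/-- `∫_Q |𝟙_E - ⨍_Q 𝟙_E|`, the mean oscillation of `𝟙_E` on `Q`, written without integrals. -/
noncomputable def meanOsc (μ : Measure X) (Q E : Set X) : ℝ≥0∞ :=
  2 * μ (E ∩ Q) * μ (Eᶜ ∩ Q) / μ Q

-- `p, r, s, t` are the measures of `E ∩ F`, `E \ F`, `F \ E`, `(E ∪ F)ᶜ` inside a cube of
-- measure `q`.
theorem add_le_meanOsc_bound {p r s t q : ℝ≥0∞} (hq : p + r + s + t = q) (hq0 : q ≠ 0)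
    (hqtop : q ≠ ⊤) :
    r + s ≤ 2 * (p + r) * (s + t) / q + 2 * (p + s) * (r + t) / q +
      ((p + r - (p + s)) + (p + s - (p + r))) := by
  wlog hsr : s ≤ r generalizing r s
  · have := this (r := s) (s := r) (by rw [← hq]; ring) (le_of_not_ge hsr)
    rwa [add_comm s r, add_comm (2 * (p + s) * _ / q), add_comm (p + s - _)] at this
  have hdiff : r - s ≤ p + r - (p + s) := by
    refine ENNReal.le_sub_of_add_le_right (ne_top_of_le_ne_top (hq ▸ hqtop)
      (by rw [add_right_comm p r s]; exact le_self_add.trans le_self_add)) (le_of_eq ?_)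
    rw [← add_assoc, add_comm _ p, add_assoc, tsub_add_cancel_of_le hsr]
  have htwo : 2 * s ≤ (2 * (p + r) * (s + t) + 2 * (p + s) * (r + t)) / q := by
    rw [ENNReal.le_div_iff_mul_le (Or.inl hq0) (Or.inl hqtop), ← hq]
    calc 2 * s * (p + r + s + t) = 2 * (s * p + s * r + s * s + s * t) := by ring
      _ ≤ 2 * (s * p + s * r + r * s + s * t) := by gcongr
      _ ≤ 2 * (s * p + s * r + r * s + s * t) + 2 * (p * t + r * t + p * r + p * t) :=
        le_self_add
      _ = 2 * (p + r) * (s + t) + 2 * (p + s) * (r + t) := by ring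
  calc r + s = 2 * s + (r - s) := by rw [two_mul, add_assoc, add_tsub_cancel_of_le hsr, add_comm]
    _ ≤ _ := by
      rw [ENNReal.div_add_div_same]
      exact add_le_add htwo (hdiff.trans le_self_add)

theorem measure_symmDiff_inter_le (μ : Measure X) {E F Q : Set X} (hE : MeasurableSet E)
    (hF : MeasurableSet F) (hQ0 : μ Q ≠ 0) (hQ : μ Q ≠ ⊤) :
    μ ((E ∆ F) ∩ Q) ≤ meanOsc μ Q E + meanOsc μ Q F +
      ((μ (E ∩ Q) - μ (F ∩ Q)) + (μ (F ∩ Q) - μ (E ∩ Q))) := by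
  have split (A B : Set X) (hB : MeasurableSet B) :
      μ (A ∩ Q) = μ (A ∩ B ∩ Q) + μ (A ∩ Bᶜ ∩ Q) := by
    rw [← measure_inter_add_sdiff (A ∩ Q) hB, Set.inter_right_comm A Q B, Set.sdiff_eq,
      Set.inter_right_comm A Q Bᶜ]
  have hQE : μ Q = μ (E ∩ Q) + μ (Eᶜ ∩ Q) := by simpa using split Set.univ E hE
  have hFQ : μ (F ∩ Q) = μ (E ∩ F ∩ Q) + μ (Eᶜ ∩ F ∩ Q) := by
    rw [split F E hE, Set.inter_comm F E, Set.inter_comm F Eᶜ]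
  have hFcQ : μ (Fᶜ ∩ Q) = μ (E ∩ Fᶜ ∩ Q) + μ (Eᶜ ∩ Fᶜ ∩ Q) := by
    rw [split Fᶜ E hE, Set.inter_comm Fᶜ E, Set.inter_comm Fᶜ Eᶜ]
  have hsd : μ ((E ∆ F) ∩ Q) = μ (E ∩ Fᶜ ∩ Q) + μ (Eᶜ ∩ F ∩ Q) := by
    rw [split _ E hE]
    congr 2 <;> ext x <;> simp only [Set.mem_inter_iff, Set.mem_compl_iff, Set.mem_symmDiff] <;>
      tauto
  rw [meanOsc, meanOsc, hsd, hFQ, hFcQ, split E F hF, split Eᶜ F hF]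
  refine add_le_meanOsc_bound ?_ hQ0 hQ
  rw [hQE, split E F hF, split Eᶜ F hF]
  ring

theorem measure_mul_measure_le_lintegral_kernel {V : Type*} [NormedAddCommGroup V]
    [MeasurableSpace V] (μ : Measure V) {A B : Set V} {δ p : ℝ} (hp : 0 ≤ p)
    (hA : MeasurableSet A) (hB : MeasurableSet B) (hAB : Disjoint A B)
    (hδ : ∀ x ∈ A, ∀ y ∈ B, ‖x - y‖ ≤ δ) :
    μ A * μ B ≤
      ENNReal.ofReal (δ ^ p) * ∫⁻ x in A, ∫⁻ y in B, ENNReal.ofReal (‖x - y‖ ^ (-p)) ∂μ ∂μ := by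
  have hkernel :
      ∀ x ∈ A, ∀ y ∈ B, 1 ≤ ENNReal.ofReal (δ ^ p) * ENNReal.ofReal (‖x - y‖ ^ (-p)) := by
    intro x hx y hy
    have hxy : 0 < ‖x - y‖ := norm_pos_iff.2 (sub_ne_zero.2 (hAB.ne_of_mem hx hy))
    have hδ0 : 0 < δ := hxy.trans_le (hδ x hx y hy)
    rw [← ENNReal.ofReal_mul (by positivity), ENNReal.one_le_ofReal, Real.rpow_neg hxy.le,
      ← div_eq_mul_inv, one_le_div (by positivity)]
    exact Real.rpow_le_rpow hxy.le (hδ x hx y hy) hp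
  calc μ A * μ B = ∫⁻ _ in A, ∫⁻ _ in B, 1 ∂μ ∂μ := by simp [mul_comm]
    _ ≤ ∫⁻ x in A, ∫⁻ y in B, ENNReal.ofReal (δ ^ p) * ENNReal.ofReal (‖x - y‖ ^ (-p)) ∂μ ∂μ :=
      setLIntegral_mono' hA fun x hx => setLIntegral_mono' hB fun y hy => hkernel x hx y hy
    _ = _ := by simp_rw [lintegral_const_mul' _ _ ENNReal.ofReal_ne_top]

theorem symmDiff_preimage_singleton_subset {Y β : Type*} (f g : Y → β) (c : β) :
    (f ⁻¹' {c}) ∆ (g ⁻¹' {c}) ⊆ {x | f x ≠ g x} := by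
  rintro x (⟨hf, hg⟩ | ⟨hg, hf⟩)
  · exact fun h => hg (h.symm.trans hf)
  · exact fun h => hf (h.trans hg)

theorem lintegral_ofReal_abs_sub_le {Y : Type*} [MeasurableSpace Y] {μ : Measure Y}
    {f g : Y → ℝ} {B : ℝ} (hf : ∀ᵐ x ∂μ, |f x| ≤ B) (hg : ∀ᵐ x ∂μ, |g x| ≤ B) :
    ∫⁻ x, ENNReal.ofReal |f x - g x| ∂μ ≤ ENNReal.ofReal (2 * B) * μ {x | f x ≠ g x} := by
  refine (lintegral_mono_ae ?_).trans (lintegral_indicator_const_le _ _)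
  filter_upwards [hf, hg] with x hfx hgx
  by_cases h : f x = g x
  · simp [h]
  · rw [Set.indicator_of_mem h]
    exact ENNReal.ofReal_le_ofReal (by linarith [abs_sub (f x) (g x)])

theorem tendsto_sum_tsub_add_tsub {ι : Type*} (S : Finset ι) {a : ι → ℕ → ℝ≥0∞}
    {L : ι → ℝ≥0∞} (hL : ∀ i ∈ S, L i ≠ ⊤) (ha : ∀ i ∈ S, Tendsto (a i) atTop (𝓝 (L i))) :
    Tendsto (fun p : ℕ × ℕ => ∑ i ∈ S, ((a i p.1 - a i p.2) + (a i p.2 - a i p.1)))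
      atTop (𝓝 0) := by
  rw [← prod_atTop_atTop_eq]
  have hfst (i) (hi : i ∈ S) := (ha i hi).comp (tendsto_fst (g := (atTop : Filter ℕ)))
  have hsnd (i) (hi : i ∈ S) := (ha i hi).comp (tendsto_snd (f := (atTop : Filter ℕ)))
  simpa using tendsto_finsetSum S fun i hi =>
    (ENNReal.Tendsto.sub (hfst i hi) (hsnd i hi) (.inl (hL i hi))).add
      (ENNReal.Tendsto.sub (hsnd i hi) (hfst i hi) (.inl (hL i hi)))

theorem exists_strictMono_le_of_tendsto_zero {δ : ℕ → ℕ → ℝ≥0∞}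
    (h : Tendsto (fun p : ℕ × ℕ => δ p.1 p.2) atTop (𝓝 0)) {ε : ℕ → ℝ≥0∞}
    (hε : ∀ j, ε j ≠ 0) : ∃ φ : ℕ → ℕ, StrictMono φ ∧ ∀ j, δ (φ j) (φ (j + 1)) ≤ ε j := by
  have (j : ℕ) : ∃ N, ∀ n ≥ N, ∀ m ≥ N, δ n m ≤ ε j :=
    eventually_atTop_prod_self'.1 (ENNReal.tendsto_nhds_zero.1 h _ (pos_iff_ne_zero.2 (hε j)))
  choose N hN using this
  obtain ⟨φ, hφ, hφN⟩ := extraction_forall_of_eventually fun j => eventually_ge_atTop (N j)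
  exact ⟨φ, hφ, fun j => hN j _ (hφN j) _ ((hφN j).trans (hφ j.lt_succ_self).le)⟩

theorem tendsto_of_forall_eq_succ {β : Type*} [TopologicalSpace β] {u : ℕ → β} {n : ℕ}
    (h : ∀ k, u (k + n) = u (k + n + 1)) : Tendsto u atTop (𝓝 (u n)) := by
  have hconst (k : ℕ) : u (k + n) = u n := by
    induction k with
    | zero => simp
    | succ k ih => rw [← ih, h k, Nat.add_right_comm]
  refine tendsto_atTop_of_eventually_const (i₀ := n) fun m hm => ?_
  rw [← Nat.sub_add_cancel hm]
  exact hconst _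

variable {μ : Measure X} {β : Type*} [TopologicalSpace β] [T2Space β]
  [TopologicalSpace.PseudoMetrizableSpace β] [MeasurableSpace β] [BorelSpace β]

/-- By Borel–Cantelli the sequence is a.e. eventually constant; its disagreement with the limit
is controlled by a tail of the series. -/
theorem exists_measurable_tendsto_measure_ne {f : ℕ → X → β} (hf : ∀ n, AEMeasurable (f n) μ)
    (hsum : ∑' n, μ {x | f n x ≠ f (n + 1) x} ≠ ⊤) :
    ∃ g, Measurable g ∧ Tendsto (fun n => μ {x | f n x ≠ g x}) atTop (𝓝 0) := by
  have hconv : ∀ᵐ x ∂μ, ∃ l, Tendsto (fun n => f n x) atTop (𝓝 l) := by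
    filter_upwards [ae_eventually_notMem hsum] with x hx
    obtain ⟨N, hN⟩ := eventually_atTop.1 hx
    exact ⟨f N x, tendsto_of_forall_eq_succ (u := fun n => f n x)
      fun k => not_not.1 (hN (k + N) (Nat.le_add_left N k))⟩
  obtain ⟨g, hg, hlim⟩ := measurable_limit_of_tendsto_metrizable_ae hf hconv
  refine ⟨g, hg, ?_⟩
  have htail (n : ℕ) : μ {x | f n x ≠ g x} ≤ ∑' k, μ {x | f (k + n) x ≠ f (k + n + 1) x} := by
    refine (measure_mono_ae (hlim.mono fun x hx hne => Set.mem_iUnion.2 ?_)).trans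
      (measure_iUnion_le _)
    by_contra! hstable
    exact hne (tendsto_nhds_unique (tendsto_of_forall_eq_succ (u := fun n => f n x)
      fun k => not_not.1 (hstable k)) hx)
  exact tendsto_nhds_bot_mono' (ENNReal.tendsto_sum_nat_add _ hsum) htail

theorem exists_subseq_tendsto_measure_ne {f : ℕ → X → β} (hf : ∀ n, AEMeasurable (f n) μ)
    (h : Tendsto (fun p : ℕ × ℕ => μ {x | f p.1 x ≠ f p.2 x}) atTop (𝓝 0)) :
    ∃ φ : ℕ → ℕ, StrictMono φ ∧
      ∃ g, Measurable g ∧ Tendsto (fun n => μ {x | f (φ n) x ≠ g x}) atTop (𝓝 0) := by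
  obtain ⟨φ, hφ, hle⟩ := exists_strictMono_le_of_tendsto_zero
    (δ := fun n m => μ {x | f n x ≠ f m x}) h (ε := fun j => 2⁻¹ ^ j)
    fun j => by simp
  have hsum : ∑' j, μ {x | f (φ j) x ≠ f (φ (j + 1)) x} ≠ ⊤ :=
    ne_top_of_le_ne_top (by simp [ENNReal.tsum_geometric]) (ENNReal.tsum_le_tsum hle)
  exact ⟨φ, hφ, exists_measurable_tendsto_measure_ne (fun n => hf (φ n)) hsum⟩

end Measure

section Cubes

variable {d : ℕ}

theorem norm_le_sqrt_mul_of_forall_abs_le {x : EuclideanSpace ℝ (Fin d)} {C : ℝ} (hC : 0 ≤ C)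
    (h : ∀ i, |x i| ≤ C) : ‖x‖ ≤ √d * C := by
  rw [EuclideanSpace.norm_eq, ← Real.sqrt_sq hC, ← Real.sqrt_mul (Nat.cast_nonneg d)]
  gcongr
  calc ∑ i, ‖x i‖ ^ 2 ≤ ∑ _ : Fin d, C ^ 2 := by
        gcongr with i; exact (Real.norm_eq_abs _).trans_le (h i)
    _ = d * C ^ 2 := by simp

def cube (s : ℝ) (z : Fin d → ℤ) : Set (EuclideanSpace ℝ (Fin d)) :=
  (MeasurableEquiv.toLp 2 (Fin d → ℝ)).symm ⁻¹'
    Set.univ.pi fun i => Set.Ico (z i * s) ((z i + 1) * s)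

variable {s : ℝ} {z : Fin d → ℤ} {x : EuclideanSpace ℝ (Fin d)}

theorem mem_cube : x ∈ cube s z ↔ ∀ i, z i * s ≤ x i ∧ x i < (z i + 1) * s := by
  rw [cube, Set.mem_preimage, Set.mem_univ_pi]
  rfl

theorem mem_cube_iff_floor (hs : 0 < s) : x ∈ cube s z ↔ ∀ i, ⌊x i / s⌋ = z i := by
  simp only [mem_cube, Int.floor_eq_iff, le_div_iff₀ hs, div_lt_iff₀ hs]

theorem measurableSet_cube : MeasurableSet (cube s z) :=
  (MeasurableEquiv.toLp 2 (Fin d → ℝ)).symm.measurable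
    (MeasurableSet.univ_pi fun _ => measurableSet_Ico)

theorem volume_cube (hs : 0 ≤ s) : volume (cube s z) = ENNReal.ofReal (s ^ d) := by
  rw [cube, (EuclideanSpace.volume_preserving_symm_measurableEquiv_toLp (Fin d)).measure_preimage
    (MeasurableSet.univ_pi fun _ => measurableSet_Ico).nullMeasurableSet, volume_pi_pi]
  simp [Real.volume_Ico, add_mul, ENNReal.ofReal_pow hs]

theorem mem_cube_floor (hs : 0 < s) (x : EuclideanSpace ℝ (Fin d)) :
    x ∈ cube s (fun i => ⌊x i / s⌋) :=
  (mem_cube_iff_floor hs).2 fun _ => rfl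

theorem iUnion_cube (hs : 0 < s) : ⋃ z, cube (d := d) s z = Set.univ :=
  Set.eq_univ_of_forall fun x => Set.mem_iUnion.2 ⟨_, mem_cube_floor hs x⟩

theorem pairwise_disjoint_cube (hs : 0 < s) :
    Pairwise (Function.onFun Disjoint (cube (d := d) s)) := by
  intro z z' hne
  refine Set.disjoint_left.2 fun x hx hx' => hne (funext fun i => ?_)
  rw [← (mem_cube_iff_floor hs).1 hx i, (mem_cube_iff_floor hs).1 hx' i]

theorem norm_sub_le_of_mem_cube {y : EuclideanSpace ℝ (Fin d)} (hx : x ∈ cube s z)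
    (hy : y ∈ cube s z) (hs : 0 ≤ s) : ‖x - y‖ ≤ √d * s := by
  refine norm_le_sqrt_mul_of_forall_abs_le hs fun i => ?_
  have := mem_cube.1 hx i
  have := mem_cube.1 hy i
  rw [PiLp.sub_apply, abs_sub_le_iff]
  constructor <;> linarith

theorem finite_setOf_cube_inter_nonempty (hs : 0 < s) {Ω : Set (EuclideanSpace ℝ (Fin d))}
    (hΩ : Bornology.IsBounded Ω) : {z : Fin d → ℤ | (cube s z ∩ Ω).Nonempty}.Finite := by
  obtain ⟨R, hR⟩ := hΩ.subset_closedBall 0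
  refine (Set.finite_Icc (fun _ => ⌊-R / s⌋) fun _ => ⌊R / s⌋).subset ?_
  rintro z ⟨x, hxz, hxΩ⟩
  have hxR : ∀ i, |x i| ≤ R := fun i =>
    (PiLp.norm_apply_le x i).trans (by simpa using hR hxΩ)
  constructor <;> intro i <;> rw [← (mem_cube_iff_floor hs).1 hxz i] <;>
    exact Int.floor_mono (div_le_div_of_nonneg_right (by linarith [abs_le.1 (hxR i)]) hs.le)

theorem measure_le_sum_inter_cube (hs : 0 < s) {Ω A : Set (EuclideanSpace ℝ (Fin d))}
    (hΩ : Bornology.IsBounded Ω) (hA : A ⊆ Ω) :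
    volume A ≤ ∑ z ∈ (finite_setOf_cube_inter_nonempty hs hΩ).toFinset,
      volume (A ∩ cube s z) := by
  refine (measure_mono fun x hx => ?_).trans (measure_biUnion_finset_le _ _)
  exact Set.mem_biUnion (x := fun i => ⌊x i / s⌋)
    ((Set.Finite.mem_toFinset _).2 ⟨x, mem_cube_floor hs x, hA hx⟩) ⟨hx, mem_cube_floor hs x⟩

end Cubes

section FractionalPerimeter

variable {d : ℕ} {α s : ℝ}

theorem tsum_meanOsc_cube_le (hα : 0 ≤ α) (hs : 0 < s) {E : Set (EuclideanSpace ℝ (Fin d))}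
    (hE : MeasurableSet E) :
    ∑' z, meanOsc volume (cube s z) E ≤
      ENNReal.ofReal (√d ^ ((d : ℝ) + α) * s ^ α) * fracPer d α E := by
  set K := ENNReal.ofReal (√d ^ ((d : ℝ) + α) * s ^ α)
  set I : (Fin d → ℤ) → ℝ≥0∞ := fun z => ∫⁻ x in E ∩ cube s z, ∫⁻ y in Eᶜ ∩ cube s z,
    ENNReal.ofReal (‖x - y‖ ^ (-((d : ℝ) + α)))
  have hK : K = ENNReal.ofReal ((√d * s) ^ ((d : ℝ) + α)) / ENNReal.ofReal (s ^ d) := by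
    rw [← ENNReal.ofReal_div_of_pos (by positivity), Real.mul_rpow (by positivity) hs.le,
      Real.rpow_add hs, Real.rpow_natCast, mul_comm (s ^ d), ← mul_assoc,
      mul_div_cancel_right₀ _ (by positivity)]
  have hcube (z : Fin d → ℤ) : meanOsc volume (cube s z) E ≤ K * (2 * I z) := by
    have hprod := measure_mul_measure_le_lintegral_kernel volume
      (A := E ∩ cube s z) (B := Eᶜ ∩ cube s z) (p := (d : ℝ) + α) (by positivity)
      (hE.inter measurableSet_cube) (hE.compl.inter measurableSet_cube)
      (disjoint_compl_right.mono Set.inter_subset_left Set.inter_subset_left)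
      fun x hx y hy => norm_sub_le_of_mem_cube hx.2 hy.2 hs.le
    rw [meanOsc, volume_cube hs.le, hK, mul_assoc]
    calc 2 * (volume (E ∩ cube s z) * volume (Eᶜ ∩ cube s z)) / ENNReal.ofReal (s ^ d)
        ≤ 2 * (ENNReal.ofReal ((√d * s) ^ ((d : ℝ) + α)) * I z) / ENNReal.ofReal (s ^ d) := by
          gcongr 2 * ?_ / _
      _ = _ := by simp only [div_eq_mul_inv]; ring
  have hsplit : ∑' z, I z ≤ ∫⁻ x in E, ∫⁻ y in Eᶜ, ENNReal.ofReal (‖x - y‖ ^ (-((d : ℝ) + α))) :=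
    calc ∑' z, I z ≤ ∑' z, ∫⁻ x in E ∩ cube s z, ∫⁻ y in Eᶜ,
          ENNReal.ofReal (‖x - y‖ ^ (-((d : ℝ) + α))) :=
        ENNReal.tsum_le_tsum fun _ => lintegral_mono fun _ =>
          lintegral_mono_set Set.inter_subset_left
      _ = _ := by
        rw [← lintegral_iUnion (fun z => hE.inter measurableSet_cube)
          ((pairwise_disjoint_cube hs).mono fun _ _ h =>
            h.mono Set.inter_subset_right Set.inter_subset_right),
          ← Set.inter_iUnion, iUnion_cube hs, Set.inter_univ]
  calc ∑' z, meanOsc volume (cube s z) E ≤ ∑' z, K * (2 * I z) := ENNReal.tsum_le_tsum hcube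
    _ = K * (2 * ∑' z, I z) := by rw [ENNReal.tsum_mul_left, ENNReal.tsum_mul_left]
    _ ≤ K * fracPer d α E := by rw [fracPer]; gcongr

theorem tendsto_measure_symmDiff_of_tendsto_cube (hα : 0 < α)
    {Ω : Set (EuclideanSpace ℝ (Fin d))} (hΩ : Bornology.IsBounded Ω)
    {E : ℕ → Set (EuclideanSpace ℝ (Fin d))} (hE : ∀ n, MeasurableSet (E n))
    (hEΩ : ∀ n m, E n ∆ E m ⊆ Ω) {C : ℝ≥0∞} (hC : C ≠ ⊤) (hper : ∀ n, fracPer d α (E n) ≤ C)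
    (hconv : ∀ (k : ℕ) z, ∃ L,
      Tendsto (fun n => volume (E n ∩ cube (1 / (k + 1)) z)) atTop (𝓝 L)) :
    Tendsto (fun p : ℕ × ℕ => volume (E p.1 ∆ E p.2)) atTop (𝓝 0) := by
  rw [ENNReal.tendsto_nhds_zero]
  intro ε hε
  have hε2 : 0 < ε / 2 := ENNReal.half_pos hε.ne'
  have hscale : Tendsto (fun k : ℕ =>
      ENNReal.ofReal (√d ^ ((d : ℝ) + α) * (1 / (k + 1)) ^ α) * C) atTop (𝓝 0) := by
    have hpow : Tendsto (fun k : ℕ => (1 / ((k : ℝ) + 1)) ^ α) atTop (𝓝 0) := by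
      have h0 := (Real.continuousAt_rpow_const 0 α (.inr hα.le)).tendsto
      rw [Real.zero_rpow hα.ne'] at h0
      exact h0.comp tendsto_one_div_add_atTop_nhds_zero_nat
    simpa using ENNReal.Tendsto.mul_const
      (ENNReal.tendsto_ofReal (hpow.const_mul (√d ^ ((d : ℝ) + α)))) (.inr hC)
  obtain ⟨k, hk⟩ := (hscale.eventually (ge_mem_nhds (ENNReal.half_pos hε2.ne'))).exists
  choose L hL using hconv k
  set s : ℝ := 1 / (k + 1)
  have hs : 0 < s := by positivity
  set S := (finite_setOf_cube_inter_nonempty hs hΩ).toFinset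
  have hosc (n : ℕ) : ∑ z ∈ S, meanOsc volume (cube s z) (E n) ≤ ε / 2 / 2 :=
    (ENNReal.sum_le_tsum S).trans <| (tsum_meanOsc_cube_le hα.le hs (hE n)).trans <|
      (mul_le_mul_right (hper n) _).trans hk
  have hdiff := (ENNReal.tendsto_nhds_zero.1 (tendsto_sum_tsub_add_tsub S
    (fun z _ => ne_top_of_le_ne_top (by simp [volume_cube hs.le])
      (le_of_tendsto' (hL z) fun _ => measure_mono Set.inter_subset_right))
    fun z _ => hL z)) _ hε2
  filter_upwards [hdiff] with p hp
  calc volume (E p.1 ∆ E p.2)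
      ≤ ∑ z ∈ S, volume ((E p.1 ∆ E p.2) ∩ cube s z) :=
        measure_le_sum_inter_cube hs hΩ (hEΩ p.1 p.2)
    _ ≤ ∑ z ∈ S, (meanOsc volume (cube s z) (E p.1) + meanOsc volume (cube s z) (E p.2) +
          ((volume (E p.1 ∩ cube s z) - volume (E p.2 ∩ cube s z)) +
            (volume (E p.2 ∩ cube s z) - volume (E p.1 ∩ cube s z)))) :=
        Finset.sum_le_sum fun z _ => measure_symmDiff_inter_le volume (hE _) (hE _)
          (by simp [volume_cube hs.le, hs]) (by simp [volume_cube hs.le])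
    _ ≤ ε / 2 / 2 + ε / 2 / 2 + ε / 2 :=
        Finset.sum_add_distrib.le.trans <| add_le_add
          (Finset.sum_add_distrib.le.trans (add_le_add (hosc _) (hosc _))) hp
    _ = ε := by rw [ENNReal.add_halves, ENNReal.add_halves]

theorem exists_subseq_tendsto_measure_symmDiff {ι : Type*} [Countable ι] (hα : 0 < α)
    {Ω : Set (EuclideanSpace ℝ (Fin d))} (hΩ : Bornology.IsBounded Ω)
    {E : ℕ → ι → Set (EuclideanSpace ℝ (Fin d))} (hE : ∀ n i, MeasurableSet (E n i))
    (hEΩ : ∀ n m i, E n i ∆ E m i ⊆ Ω) (hper : ∀ i, ∃ C < ⊤, ∀ n, fracPer d α (E n i) ≤ C) :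
    ∃ φ : ℕ → ℕ, StrictMono φ ∧
      ∀ i, Tendsto (fun p : ℕ × ℕ => volume (E (φ p.1) i ∆ E (φ p.2) i)) atTop (𝓝 0) := by
  obtain ⟨L, -, φ, hφ, hL⟩ := isCompact_univ.tendsto_subseq (fun _ => Set.mem_univ _)
    (x := fun n (q : ι × ℕ × (Fin d → ℤ)) => volume (E n q.1 ∩ cube (1 / (q.2.1 + 1)) q.2.2))
  refine ⟨φ, hφ, fun i => ?_⟩
  obtain ⟨C, hC, hCE⟩ := hper i
  exact tendsto_measure_symmDiff_of_tendsto_cube hα hΩ (fun _ => hE _ i) (fun _ _ => hEΩ _ _ i)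
    hC.ne (fun _ => hCE _) fun k z => ⟨L (i, k, z), tendsto_pi_nhds.1 hL (i, k, z)⟩

end FractionalPerimeter

end FracPerCompactness

namespace Feasible

variable {d M : ℕ} {Ω : Set (EuclideanSpace ℝ (Fin d))} {wv : Fin M → ℤ}
  {w w' : EuclideanSpace ℝ (Fin d) → ℝ}

theorem setOf_ne_subset (hw : Feasible d M Ω wv w) (hw' : ∀ x ∉ Ω, w' x = 0) :
    {x | w x ≠ w' x} ⊆ Ω := fun x hne => by
  by_contra hx
  exact hne (by rw [hw.2.1 x hx, hw' x hx])

theorem ae_mem_range (hw : Feasible d M Ω wv w) (hΩ : MeasurableSet Ω) :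
    ∀ᵐ x, x ∈ Ω → ∃ i, w x = wv i :=
  (ae_restrict_iff' hΩ).1 hw.2.2

theorem ae_abs_le (hw : Feasible d M Ω wv w) (hΩ : MeasurableSet Ω) :
    ∀ᵐ x, |w x| ≤ ∑ i, |(wv i : ℝ)| := by
  filter_upwards [hw.ae_mem_range hΩ] with x hx
  by_cases hxΩ : x ∈ Ω
  · obtain ⟨i, hi⟩ := hx hxΩ
    rw [hi]
    exact Finset.single_le_sum (f := fun i => |(wv i : ℝ)|) (fun _ _ => abs_nonneg _)
      (Finset.mem_univ i)
  · rw [hw.2.1 x hxΩ, abs_zero]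
    positivity

theorem measure_ne_le_sum_symmDiff (hw : Feasible d M Ω wv w) (hw' : Feasible d M Ω wv w')
    (hΩ : MeasurableSet Ω) :
    volume {x | w x ≠ w' x} ≤ ∑ i, volume ((w ⁻¹' {(wv i : ℝ)}) ∆ (w' ⁻¹' {(wv i : ℝ)})) := by
  refine (measure_mono_ae ?_).trans (measure_iUnion_fintype_le _ _)
  filter_upwards [hw.ae_mem_range hΩ] with x hx hne
  obtain ⟨i, hi⟩ := hx (hw.setOf_ne_subset hw'.2.1 hne)
  exact Set.mem_iUnion.2 ⟨i, Or.inl ⟨hi, fun h => hne (hi.trans h.symm)⟩⟩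

theorem measure_diff_iUnion_preimage (hw : Feasible d M Ω wv w) (hΩ : MeasurableSet Ω) :
    volume (Ω \ ⋃ i, w ⁻¹' {(wv i : ℝ)}) = 0 := by
  rw [measure_eq_zero_iff_ae_notMem]
  filter_upwards [hw.ae_mem_range hΩ] with x hx ⟨hxΩ, hxw⟩
  obtain ⟨i, hi⟩ := hx hxΩ
  exact hxw (Set.mem_iUnion.2 ⟨i, hi⟩)

theorem of_tendsto_measure_ne {v : ℕ → EuclideanSpace ℝ (Fin d) → ℝ}
    (hv : ∀ n, Feasible d M Ω wv (v n)) (hw : Measurable w) (hwΩ : ∀ x ∉ Ω, w x = 0)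
    (h : Tendsto (fun n => volume {x | v n x ≠ w x}) atTop (𝓝 0)) : Feasible d M Ω wv w := by
  refine ⟨hw, hwΩ, ?_⟩
  rw [ae_iff]
  refine le_antisymm (ge_of_tendsto' h fun n => ?_) zero_le
  refine (measure_mono_ae ((hv n).2.2.mono fun x ⟨i, hi⟩ hx => ?_)).trans
    (Measure.restrict_apply_le _ _)
  exact fun heq => hx ⟨i, heq ▸ hi⟩

theorem exists_subseq_tendsto_of_cauchy {w : ℕ → EuclideanSpace ℝ (Fin d) → ℝ}
    (hw : ∀ n, Feasible d M Ω wv (w n)) (hΩ : MeasurableSet Ω)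
    (h : Tendsto (fun p : ℕ × ℕ => volume {x | w p.1 x ≠ w p.2 x}) atTop (𝓝 0)) :
    ∃ φ : ℕ → ℕ, StrictMono φ ∧ ∃ wlim, Feasible d M Ω wv wlim ∧
      Tendsto (fun n => volume {x | w (φ n) x ≠ wlim x}) atTop (𝓝 0) := by
  obtain ⟨φ, hφ, g, hg, hlim⟩ :=
    FracPerCompactness.exists_subseq_tendsto_measure_ne (fun n => (hw n).1.aemeasurable) h
  have hgΩ : ∀ x ∉ Ω, Ω.indicator g x = 0 := fun x hx => Set.indicator_of_notMem hx g
  have hlim' : Tendsto (fun n => volume {x | w (φ n) x ≠ Ω.indicator g x}) atTop (𝓝 0) :=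
    tendsto_nhds_bot_mono' hlim fun _ => measure_mono fun x hne => by
      simpa [Set.indicator_of_mem ((hw _).setOf_ne_subset hgΩ hne)] using hne
  exact ⟨φ, hφ, _, of_tendsto_measure_ne (fun _ => hw _) (hg.indicator hΩ) hgΩ hlim', hlim'⟩

end Feasible

open FracPerCompactness in
theorem fracPer_compactness_general (d M : ℕ) (α : ℝ) (hα : α ∈ Set.Ioo (0 : ℝ) 1)
    (Ω : Set (EuclideanSpace ℝ (Fin d))) (hΩm : MeasurableSet Ω)
    (hΩb : Bornology.IsBounded Ω)
    (wv : Fin M → ℤ) (hinj : Function.Injective wv)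
    (w : ℕ → EuclideanSpace ℝ (Fin d) → ℝ) (hfeas : ∀ n, Feasible d M Ω wv (w n))
    (hbd : ∀ i, ∃ Cb : ℝ≥0∞, Cb < ⊤ ∧ ∀ n, fracPer d α ((w n) ⁻¹' {(wv i : ℝ)}) ≤ Cb) :
    ∃ ns : ℕ → ℕ, StrictMono ns ∧
      ∃ wlim : EuclideanSpace ℝ (Fin d) → ℝ, Feasible d M Ω wv wlim ∧
        (∀ i, Tendsto
          (fun k => volume (((w (ns k)) ⁻¹' {(wv i : ℝ)}) ∆ (wlim ⁻¹' {(wv i : ℝ)})))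
          atTop (nhds 0)) ∧
        Tendsto (fun k => ∫⁻ x, ENNReal.ofReal |w (ns k) x - wlim x|) atTop (nhds 0) ∧
        volume (Ω \ ⋃ i, wlim ⁻¹' {(wv i : ℝ)}) = 0 ∧
        ∀ i j, i ≠ j →
          volume ((wlim ⁻¹' {(wv i : ℝ)}) ∩ (wlim ⁻¹' {(wv j : ℝ)})) = 0 := by
  obtain ⟨φ, hφ, hsets⟩ := exists_subseq_tendsto_measure_symmDiff hα.1 hΩb
    (E := fun n i => w n ⁻¹' {(wv i : ℝ)}) (fun n i => (hfeas n).1 (measurableSet_singleton _))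
    (fun n m i => (symmDiff_preimage_singleton_subset _ _ _).trans
      ((hfeas n).setOf_ne_subset (hfeas m).2.1)) hbd
  have hcauchy : Tendsto (fun p : ℕ × ℕ => volume {x | w (φ p.1) x ≠ w (φ p.2) x}) atTop (𝓝 0) :=
    tendsto_nhds_bot_mono' (by simpa using tendsto_finsetSum Finset.univ fun i _ => hsets i)
      fun _ => (hfeas _).measure_ne_le_sum_symmDiff (hfeas _) hΩm
  obtain ⟨ψ, hψ, wlim, hwlim, hlim⟩ :=
    Feasible.exists_subseq_tendsto_of_cauchy (fun n => hfeas (φ n)) hΩm hcauchy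
  refine ⟨φ ∘ ψ, hφ.comp hψ, wlim, hwlim, fun i => ?_, ?_, hwlim.measure_diff_iUnion_preimage hΩm,
    fun i j hij => measure_mono_null (fun x hx => hij (hinj ?_)) measure_empty⟩
  · exact tendsto_nhds_bot_mono' hlim fun _ =>
      measure_mono (symmDiff_preimage_singleton_subset _ _ _)
  · refine tendsto_nhds_bot_mono' ?_ fun _ =>
      lintegral_ofReal_abs_sub_le ((hfeas _).ae_abs_le hΩm) (hwlim.ae_abs_le hΩm)
    simpa using ENNReal.Tendsto.const_mul hlim
      (.inr (ENNReal.ofReal_ne_top (r := 2 * ∑ i, |(wv i : ℝ)|)))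
  · exact_mod_cast hx.1.symm.trans hx.2

/-- Compactness: a sequence of feasible `W`-valued functions whose level sets have uniformly
bounded fractional perimeters admits a subsequence converging in `L¹` (together with the
indicators of its level sets) to a feasible limit whose level sets partition `Ω` up to
null sets. -/
theorem fracPer_compactness (d M : ℕ) (hM : 0 < M) (α : ℝ) (hα : α ∈ Set.Ioo (0 : ℝ) 1)
    (Ω : Set (EuclideanSpace ℝ (Fin d))) (hΩm : MeasurableSet Ω)
    (hΩb : Bornology.IsBounded Ω)
    (wv : Fin M → ℤ) (hinj : Function.Injective wv)
    (w : ℕ → EuclideanSpace ℝ (Fin d) → ℝ) (hfeas : ∀ n, Feasible d M Ω wv (w n))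
    (hbd : ∀ i, ∃ Cb : ℝ≥0∞, Cb < ⊤ ∧ ∀ n, fracPer d α ((w n) ⁻¹' {(wv i : ℝ)}) ≤ Cb) :
    ∃ ns : ℕ → ℕ, StrictMono ns ∧
      ∃ wlim : EuclideanSpace ℝ (Fin d) → ℝ, Feasible d M Ω wv wlim ∧
        (∀ i, Tendsto
          (fun k => volume (((w (ns k)) ⁻¹' {(wv i : ℝ)}) ∆ (wlim ⁻¹' {(wv i : ℝ)})))
          atTop (nhds 0)) ∧
        Tendsto (fun k => ∫⁻ x, ENNReal.ofReal |w (ns k) x - wlim x|) atTop (nhds 0) ∧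
        volume (Ω \ ⋃ i, wlim ⁻¹' {(wv i : ℝ)}) = 0 ∧
        ∀ i j, i ≠ j →
          volume ((wlim ⁻¹' {(wv i : ℝ)}) ∩ (wlim ⁻¹' {(wv j : ℝ)})) = 0 :=
  fracPer_compactness_general d M α hα Ω hΩm hΩb wv hinj w hfeas hbd
end
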